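/- arXiv:1511.00711 — 3 statements merged into one kernel-verified Lean document; each statement's English description precedes it below -/
import Mathlib

section
/- Let q > 1 be a real number and n ≥ 1, t ≥ 0, u ≥ 0 integers with t + u < n. Then Σ_{d=0}^{min(t,u)} (−1)^d q^{binom(d+1,2)−2d} [n−1 choose d]_q · ([t]!_q·[n−d−1]!_q)/([t−d]!_q·[n−1]!_q) · ([u]!_q·[n−d−1]!_q)/([u−d]!_q·[n−1]!_q) = q^{tu−t−u} · ([n−t−1]!_q·[n−u−1]!_q)/([n−t−u]!_q·[n−1]!_q) · (q^n − q^t − q^u + 1)/(q−1). -/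
/-- The `q`-integer `[m]_q = 1 + q + ⋯ + q^{m-1}`. -/
noncomputable def qInt (q : ℝ) (m : ℕ) : ℝ := ∑ i ∈ Finset.range m, q ^ i

/-- The `q`-factorial `[m]!_q = [1]_q [2]_q ⋯ [m]_q`. -/
noncomputable def qFact (q : ℝ) (m : ℕ) : ℝ := ∏ i ∈ Finset.range m, qInt q (i + 1)

/-- The `q`-binomial coefficient `[n choose k]_q = [n]!_q / ([k]!_q [n-k]!_q)`. -/
noncomputable def qBinom (q : ℝ) (n k : ℕ) : ℝ := qFact q n / (qFact q k * qFact q (n - k))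

/-!
Put `N = n - 1` and write `[a]_d` for the falling `q`-factorial `[a][a-1]⋯[a-d+1]`. The `d`-th
summand is `T_d(N,t,u) / q^d`, where `T_d(N,t,u) = (-1)^d q^(d choose 2) [t]_d [u]_d / ([d]! [N]_d)`
is the term of the terminating `q`-Chu–Vandermonde sum
`S(N,t,u) = ∑_d T_d(N,t,u) = q^(tu) [N-u]_t / [N]_t`, proved by induction on `u` from
`[u+1]_d = [u]_d + q^(u+1-d) [d] [u]_(d-1)`. Writing `1/q^d = 1 - (q-1)[d]/q^d` and shifting the
index with `T_(d+1)(N,t,u) = -q^d [t][u] / ([N][d+1]) · T_d(N-1,t-1,u-1)` turns the left-hand side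
into `S(N,t,u) + (q-1)/q · [t][u]/[N] · S(N-1,t-1,u-1)`, and the two closed forms add up to the
right-hand side.
-/

open Finset

section QAnalogues

variable {q : ℝ}

lemma qInt_zero : qInt q 0 = 0 := by simp [qInt]

lemma qInt_pos (hq : 0 < q) {m : ℕ} (hm : m ≠ 0) : 0 < qInt q m :=
  sum_pos (fun i _ => pow_pos hq i) (nonempty_range_iff.mpr hm)

lemma qInt_add (a b : ℕ) : qInt q (a + b) = qInt q a + q ^ a * qInt q b := by
  simp only [qInt, sum_range_add, mul_sum, pow_add]

lemma qInt_mul_sub_one (m : ℕ) : qInt q m * (q - 1) = q ^ m - 1 := geom_sum_mul q m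

lemma qInt_eq_div (hq : q ≠ 1) (m : ℕ) : qInt q m = (q ^ m - 1) / (q - 1) := geom_sum_eq hq m

lemma qFact_succ (m : ℕ) : qFact q (m + 1) = qFact q m * qInt q (m + 1) := prod_range_succ _ _

lemma qFact_pos (hq : 0 < q) (m : ℕ) : 0 < qFact q m :=
  prod_pos fun _ _ => qInt_pos hq (Nat.succ_ne_zero _)

lemma qFact_mul_pow_sub_pow {m n : ℕ} (h : m < n) :
    qFact q (n - m - 1) * (q ^ n - q ^ m) = q ^ m * (q - 1) * qFact q (n - m) := by
  obtain ⟨k, rfl⟩ := Nat.exists_eq_add_of_lt h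
  rw [show m + k + 1 - m = k + 1 by omega, Nat.add_sub_cancel, qFact_succ]
  linear_combination -(q ^ m * qFact q k) * qInt_mul_sub_one (q := q) (k + 1)

noncomputable def qDescFactorial (q : ℝ) (a d : ℕ) : ℝ := ∏ i ∈ range d, qInt q (a - i)

@[simp] lemma qDescFactorial_zero (a : ℕ) : qDescFactorial q a 0 = 1 := prod_range_zero _

lemma qDescFactorial_succ (a d : ℕ) :
    qDescFactorial q a (d + 1) = qDescFactorial q a d * qInt q (a - d) :=
  prod_range_succ _ _

lemma succ_qDescFactorial_succ (a d : ℕ) :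
    qDescFactorial q (a + 1) (d + 1) = qInt q (a + 1) * qDescFactorial q a d := by
  rw [qDescFactorial, prod_range_succ', mul_comm]
  simp only [Nat.sub_zero, Nat.add_sub_add_right, qDescFactorial]

lemma qDescFactorial_eq_zero_of_lt {a d : ℕ} (h : a < d) : qDescFactorial q a d = 0 :=
  prod_eq_zero (mem_range.mpr h) (by rw [Nat.sub_self, qInt_zero])

lemma qDescFactorial_pos (hq : 0 < q) {a d : ℕ} (h : d ≤ a) : 0 < qDescFactorial q a d :=
  prod_pos fun i hi => qInt_pos hq (by rw [mem_range] at hi; omega)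

lemma qFact_eq_qDescFactorial_mul {a d : ℕ} (h : d ≤ a) :
    qFact q a = qDescFactorial q a d * qFact q (a - d) := by
  induction d with
  | zero => simp
  | succ d ih =>
    rw [ih (by omega), qDescFactorial_succ, show a - d = a - (d + 1) + 1 by omega, qFact_succ]
    ring

/-- `[u+1]_{e+1} = [u]_{e+1} + q^{u-e} [e+1] [u]_e`, multiplied by `q^e` so that it also holds
when `u < e`. -/
lemma pow_mul_succ_qDescFactorial_succ (u e : ℕ) :
    q ^ e * qDescFactorial q (u + 1) (e + 1) =
      q ^ e * qDescFactorial q u (e + 1) + q ^ u * qInt q (e + 1) * qDescFactorial q u e := by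
  rcases lt_or_ge u e with h | h
  · simp [qDescFactorial_eq_zero_of_lt, h, h.trans (Nat.lt_succ_self e)]
  · obtain ⟨k, rfl⟩ := Nat.exists_eq_add_of_le h
    rw [succ_qDescFactorial_succ, qDescFactorial_succ, Nat.add_sub_cancel_left,
      show e + k + 1 = k + (e + 1) by omega, qInt_add, pow_add]
    ring

noncomputable def qVandermondeTerm (q : ℝ) (N t u d : ℕ) : ℝ :=
  (-1) ^ d * q ^ d.choose 2 * qDescFactorial q t d * qDescFactorial q u d /
    (qFact q d * qDescFactorial q N d)

noncomputable def qVandermondeSum (q : ℝ) (N t u : ℕ) : ℝ :=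
  ∑ d ∈ range (t + 1), qVandermondeTerm q N t u d

@[simp] lemma qVandermondeTerm_zero (N t u : ℕ) : qVandermondeTerm q N t u 0 = 1 := by
  simp [qVandermondeTerm, qFact]

lemma qVandermondeTerm_eq_zero_of_lt {N t u d : ℕ} (h : u < d) :
    qVandermondeTerm q N t u d = 0 := by
  simp [qVandermondeTerm, qDescFactorial_eq_zero_of_lt h]

lemma qVandermondeTerm_succ_succ (N t u d : ℕ) :
    qVandermondeTerm q (N + 1) (t + 1) (u + 1) (d + 1) =
      -(q ^ d * qInt q (t + 1) * qInt q (u + 1) / (qInt q (N + 1) * qInt q (d + 1))) *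
        qVandermondeTerm q N t u d := by
  simp only [qVandermondeTerm, succ_qDescFactorial_succ, qFact_succ, Nat.choose_succ_succ',
    Nat.choose_one_right, pow_succ, pow_add]
  ring

lemma qVandermondeTerm_succ_right (hq : 0 < q) (N t u d : ℕ) :
    qVandermondeTerm q (N + 1) (t + 1) (u + 1) (d + 1) =
      qVandermondeTerm q (N + 1) (t + 1) u (d + 1) -
        q ^ u * qInt q (t + 1) / qInt q (N + 1) * qVandermondeTerm q N t u d := by
  have hd : qInt q (d + 1) ≠ 0 := (qInt_pos hq d.succ_ne_zero).ne'
  have key : q ^ d * qDescFactorial q (u + 1) (d + 1) / qInt q (d + 1) =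
      q ^ d * qDescFactorial q u (d + 1) / qInt q (d + 1) + q ^ u * qDescFactorial q u d := by
    rw [pow_mul_succ_qDescFactorial_succ]
    field_simp
  simp only [qVandermondeTerm, succ_qDescFactorial_succ (a := t),
    succ_qDescFactorial_succ (a := N), qFact_succ, Nat.choose_succ_succ', Nat.choose_one_right,
    pow_succ, pow_add]
  linear_combination (-1) ^ d * -1 * q ^ d.choose 2 * qInt q (t + 1) * qDescFactorial q t d /
    (qFact q d * qInt q (N + 1) * qDescFactorial q N d) * key

lemma qVandermondeTerm_succ_div_pow (hq : 0 < q) (N t u d : ℕ) :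
    qVandermondeTerm q (N + 1) (t + 1) (u + 1) (d + 1) / q ^ (d + 1) =
      qVandermondeTerm q (N + 1) (t + 1) (u + 1) (d + 1) +
        (q - 1) / q * (qInt q (t + 1) * qInt q (u + 1) / qInt q (N + 1)) *
          qVandermondeTerm q N t u d := by
  have hd : qInt q (d + 1) ≠ 0 := (qInt_pos hq d.succ_ne_zero).ne'
  have hN : qInt q (N + 1) ≠ 0 := (qInt_pos hq N.succ_ne_zero).ne'
  have hq0 : q ≠ 0 := hq.ne'
  rw [qVandermondeTerm_succ_succ]
  field_simp
  linear_combination -(qInt q (t + 1) * qInt q (u + 1) * qVandermondeTerm q N t u d * q ^ (d + 1)) *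
    qInt_mul_sub_one (q := q) (d + 1)

lemma qVandermondeSum_zero_left (N u : ℕ) : qVandermondeSum q N 0 u = 1 := by
  simp [qVandermondeSum]

lemma qVandermondeSum_zero_right (N t : ℕ) : qVandermondeSum q N t 0 = 1 := by
  rw [qVandermondeSum, sum_range_succ',
    sum_eq_zero fun d _ => qVandermondeTerm_eq_zero_of_lt d.succ_pos]
  simp

lemma qVandermondeSum_succ_right (hq : 0 < q) (N t u : ℕ) :
    qVandermondeSum q (N + 1) (t + 1) (u + 1) =
      qVandermondeSum q (N + 1) (t + 1) u -
        q ^ u * qInt q (t + 1) / qInt q (N + 1) * qVandermondeSum q N t u := by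
  simp only [qVandermondeSum, sum_range_succ' _ (t + 1), qVandermondeTerm_succ_right hq,
    sum_sub_distrib, mul_sum, qVandermondeTerm_zero]
  ring

lemma qVandermondeSum_eq (hq : 0 < q) {N t u : ℕ} (h : t + u ≤ N) :
    qVandermondeSum q N t u = q ^ (t * u) * qDescFactorial q (N - u) t / qDescFactorial q N t := by
  induction u generalizing N t with
  | zero =>
    rw [qVandermondeSum_zero_right, Nat.mul_zero, pow_zero, one_mul, Nat.sub_zero,
      div_self (qDescFactorial_pos hq (by omega)).ne']
  | succ u ih =>
    obtain _ | s := t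
    · simp [qVandermondeSum_zero_left]
    obtain ⟨k, rfl⟩ : ∃ k, N = s + u + k + 1 := ⟨N - (s + u + 1), by omega⟩
    rw [qVandermondeSum_succ_right hq, ih (by omega), ih (by omega),
      show s + u + k + 1 - u = (s + k) + 1 by omega, show s + u + k - u = s + k by omega,
      show s + u + k + 1 - (u + 1) = s + k by omega, succ_qDescFactorial_succ,
      succ_qDescFactorial_succ, qDescFactorial_succ (a := s + k), Nat.add_sub_cancel_left,
      show s + k + 1 = (s + 1) + k by omega, qInt_add]
    have h₁ : qInt q (s + u + k + 1) ≠ 0 := (qInt_pos hq (by omega)).ne'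
    have h₂ : qDescFactorial q (s + u + k) s ≠ 0 := (qDescFactorial_pos hq (by omega)).ne'
    field_simp
    ring

lemma sum_qVandermondeTerm_div_pow (hq : 0 < q) (N t u : ℕ) :
    ∑ d ∈ range (t + 2), qVandermondeTerm q (N + 1) (t + 1) (u + 1) d / q ^ d =
      qVandermondeSum q (N + 1) (t + 1) (u + 1) +
        (q - 1) / q * (qInt q (t + 1) * qInt q (u + 1) / qInt q (N + 1)) *
          qVandermondeSum q N t u := by
  simp only [qVandermondeSum, sum_range_succ' _ (t + 1), qVandermondeTerm_succ_div_pow hq,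
    sum_add_distrib, mul_sum, qVandermondeTerm_zero, pow_zero, div_one]
  ring

lemma sum_range_min_succ_qVandermondeTerm_div_pow (N t u : ℕ) :
    ∑ d ∈ range (min t u + 1), qVandermondeTerm q N t u d / q ^ d =
      ∑ d ∈ range (t + 1), qVandermondeTerm q N t u d / q ^ d := by
  refine sum_subset (range_subset_range.mpr (by omega)) fun d hd hd' => ?_
  simp only [mem_range] at hd hd'
  rw [qVandermondeTerm_eq_zero_of_lt (by omega), zero_div]

end QAnalogues

section Btu

variable {q : ℝ}

lemma zpow_triangle_sub (hq : q ≠ 0) (d : ℕ) :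
    q ^ ((d * (d + 1) / 2 : ℤ) - 2 * d) = q ^ d.choose 2 / q ^ d := by
  have h := Nat.add_one_mul_choose_eq d 1
  rw [Nat.choose_succ_succ, Nat.choose_one_right] at h
  have h' : (d : ℤ) * (d + 1) = 2 * (d + d.choose 2) := by
    exact_mod_cast (by linarith : d * (d + 1) = 2 * (d + d.choose 2))
  rw [show (d * (d + 1) / 2 : ℤ) - 2 * d = (d.choose 2 : ℕ) - (d : ℤ) by omega,
    zpow_sub₀ hq, zpow_natCast, zpow_natCast]

lemma btu_summand_eq (hq : 0 < q) {n t u d : ℕ} (ht : d ≤ t) (hu : d ≤ u) (hn : d < n) :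
    (-1 : ℝ) ^ d * q ^ ((d * (d + 1) / 2 : ℤ) - 2 * d) * qBinom q (n - 1) d *
        ((qFact q t * qFact q (n - d - 1)) / (qFact q (t - d) * qFact q (n - 1))) *
        ((qFact q u * qFact q (n - d - 1)) / (qFact q (u - d) * qFact q (n - 1))) =
      qVandermondeTerm q (n - 1) t u d / q ^ d := by
  have hF : ∀ m, qFact q m ≠ 0 := fun m => (qFact_pos hq m).ne'
  have := hF (t - d); have := hF (u - d); have := hF (n - 1 - d); have := hF d
  have := (qDescFactorial_pos hq (show d ≤ n - 1 by omega)).ne'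
  have := pow_ne_zero d hq.ne'
  rw [zpow_triangle_sub hq.ne', qBinom, qVandermondeTerm, show n - d - 1 = n - 1 - d by omega,
    qFact_eq_qDescFactorial_mul ht, qFact_eq_qDescFactorial_mul hu,
    qFact_eq_qDescFactorial_mul (show d ≤ n - 1 by omega)]
  field_simp

noncomputable def btuClosedForm (q : ℝ) (n t u : ℕ) : ℝ :=
  q ^ ((t * u : ℤ) - t - u) *
    ((qFact q (n - t - 1) * qFact q (n - u - 1)) / (qFact q (n - t - u) * qFact q (n - 1))) *
    ((q ^ n - q ^ t - q ^ u + 1) / (q - 1))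

lemma btuClosedForm_comm (n t u : ℕ) : btuClosedForm q n t u = btuClosedForm q n u t := by
  rw [btuClosedForm, btuClosedForm, show n - t - u = n - u - t from Nat.sub_right_comm n t u,
    show (t * u : ℤ) - t - u = u * t - u - t by ring]
  ring

lemma btuClosedForm_zero_left (hq₀ : 0 < q) (hq₁ : q ≠ 1) {n u : ℕ} (h : u < n) :
    btuClosedForm q n 0 u = 1 := by
  have key := qFact_mul_pow_sub_pow (q := q) h
  have := (qFact_pos hq₀ (n - 1)).ne'
  have := (qFact_pos hq₀ (n - u)).ne'
  have := sub_ne_zero.mpr hq₁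
  simp only [btuClosedForm, CharP.cast_eq_zero, zero_mul, sub_self, zero_sub, zpow_neg,
    zpow_natCast, tsub_zero, pow_zero]
  field_simp
  linear_combination key

lemma btuClosedForm_succ_succ (hq₀ : 0 < q) (hq₁ : q ≠ 1) {N t u : ℕ} (h : t + u < N) :
    btuClosedForm q (N + 2) (t + 1) (u + 1) =
      qVandermondeSum q (N + 1) (t + 1) (u + 1) +
        (q - 1) / q * (qInt q (t + 1) * qInt q (u + 1) / qInt q (N + 1)) *
          qVandermondeSum q N t u := by
  rw [qVandermondeSum_eq hq₀ (by omega), qVandermondeSum_eq hq₀ (by omega)]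
  obtain ⟨k, rfl⟩ : ∃ k, N = t + u + k + 1 := ⟨N - (t + u + 1), by omega⟩
  rw [btuClosedForm, show t + u + k + 1 + 2 - (t + 1) - 1 = u + k + 1 by omega,
    show t + u + k + 1 + 2 - (u + 1) - 1 = t + k + 1 by omega,
    show t + u + k + 1 + 2 - (t + 1) - (u + 1) = k + 1 by omega,
    show t + u + k + 1 + 1 - (u + 1) = t + k + 1 by omega,
    show t + u + k + 1 - u = t + k + 1 by omega,
    show t + u + k + 1 + 2 - 1 = t + u + k + 1 + 1 by omega,
    show ((t + 1 : ℕ) * (u + 1 : ℕ) - (t + 1 : ℕ) - (u + 1 : ℕ) : ℤ) = (t * u : ℕ) - 1 by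
      push_cast; ring,
    zpow_sub₀ hq₀.ne', zpow_natCast, zpow_one, qFact_succ (t + u + k + 1),
    qFact_eq_qDescFactorial_mul (show t ≤ t + u + k + 1 by omega),
    qFact_eq_qDescFactorial_mul (show t ≤ t + k + 1 by omega), qDescFactorial_succ (t + k + 1),
    succ_qDescFactorial_succ (t + u + k + 1), show t + u + k + 1 - t = u + k + 1 by omega,
    show t + k + 1 - t = k + 1 by omega]
  have := (qFact_pos hq₀ (k + 1)).ne'
  have := (qFact_pos hq₀ (u + k + 1)).ne'
  have := (qDescFactorial_pos hq₀ (show t ≤ t + u + k + 1 by omega)).ne'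
  have := (qInt_pos hq₀ (t + u + k + 1).succ_ne_zero).ne'
  have := sub_ne_zero.mpr hq₁
  simp only [qInt_eq_div hq₁] at *
  field_simp
  ring

end Btu

theorem btu_evaluation_general (q : ℝ) (hq : 1 < q) (n t u : ℕ) (htu : t + u < n) :
    ∑ d ∈ Finset.range (min t u + 1),
      (-1 : ℝ) ^ d * q ^ ((d * (d + 1) / 2 : ℤ) - 2 * d) * qBinom q (n - 1) d *
        ((qFact q t * qFact q (n - d - 1)) / (qFact q (t - d) * qFact q (n - 1))) *
        ((qFact q u * qFact q (n - d - 1)) / (qFact q (u - d) * qFact q (n - 1)))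
    = q ^ ((t * u : ℤ) - t - u) *
        ((qFact q (n - t - 1) * qFact q (n - u - 1)) / (qFact q (n - t - u) * qFact q (n - 1))) *
        ((q ^ n - q ^ t - q ^ u + 1) / (q - 1)) := by
  have hq₀ : 0 < q := zero_lt_one.trans hq
  rw [sum_congr rfl fun d hd =>
    have := mem_range.mp hd
    btu_summand_eq hq₀ (by omega) (by omega) (by omega)]
  change _ = btuClosedForm q n t u
  rcases Nat.eq_zero_or_pos (min t u) with h0 | hpos
  · rw [h0, sum_range_one, qVandermondeTerm_zero, pow_zero, div_one]
    rcases Nat.min_eq_zero_iff.mp h0 with rfl | rfl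
    · exact (btuClosedForm_zero_left hq₀ hq.ne' (by omega)).symm
    · rw [btuClosedForm_comm, btuClosedForm_zero_left hq₀ hq.ne' (by omega)]
  obtain ⟨s, rfl⟩ : ∃ s, t = s + 1 := ⟨t - 1, by omega⟩
  obtain ⟨v, rfl⟩ : ∃ v, u = v + 1 := ⟨u - 1, by omega⟩
  obtain ⟨N, rfl⟩ : ∃ N, n = N + 2 := ⟨n - 2, by omega⟩
  rw [sum_range_min_succ_qVandermondeTerm_div_pow, show N + 2 - 1 = N + 1 by omega,
    sum_qVandermondeTerm_div_pow hq₀, btuClosedForm_succ_succ hq₀ hq.ne' (by omega)]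

/-- The `q`-hypergeometric evaluation of the coefficient `b_{t,u}(q)` in the proof of
the two-factor theorem for `GL_n(F_q)`. -/
theorem btu_evaluation (q : ℝ) (hq : 1 < q) (n t u : ℕ) (hn : 1 ≤ n) (htu : t + u < n) :
    ∑ d ∈ Finset.range (min t u + 1),
      (-1 : ℝ) ^ d * q ^ ((d * (d + 1) / 2 : ℤ) - 2 * d) * qBinom q (n - 1) d *
        ((qFact q t * qFact q (n - d - 1)) / (qFact q (t - d) * qFact q (n - 1))) *
        ((qFact q u * qFact q (n - d - 1)) / (qFact q (u - d) * qFact q (n - 1)))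
    = q ^ ((t * u : ℤ) - t - u) *
        ((qFact q (n - t - 1) * qFact q (n - u - 1)) / (qFact q (n - t - u) * qFact q (n - 1))) *
        ((q ^ n - q ^ t - q ^ u + 1) / (q - 1)) :=
  btu_evaluation_general q hq n t u htu
end

section
/- Let q be a prime power and n ≥ 0 an integer. Then, as an identity of polynomials in x (equivalently, for all real x): Σ_{u ∈ GL_n(𝔽_q)} x^{dim ker(u−1)} = |GL_n(𝔽_q)| · Σ_{t=0}^{n} (x;q^{−1})_t/(q;q)_t. -/
/-!
Write `c_t(d) = ∏_{i<t} (q^d - q^i)`, the number of linearly independent `t`-tuples in `𝔽_q^d`.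
The polynomial identity `x^d = ∑_{t ≤ d} c_t(d) (x;q⁻¹)_t/(q;q)_t` turns the left-hand side into
`∑_t (∑_u c_t(fixedDim u)) (x;q⁻¹)_t/(q;q)_t`. Since `c_t(fixedDim u)` counts the independent
`t`-tuples fixed by `u`, and `GL_n(𝔽_q)` acts transitively on independent `t`-tuples for `t ≤ n`,
Burnside's lemma gives `∑_u c_t(fixedDim u) = |GL_n(𝔽_q)|`.
-/

open Finset Module MulAction

/-- The `q`-Pochhammer symbol `(a; q)_m = ∏_{i=0}^{m-1} (1 - a q^i)` over `ℝ`. -/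
noncomputable def qPoch (a q : ℝ) (m : ℕ) : ℝ := ∏ i ∈ Finset.range m, (1 - a * q ^ i)

/-- The dimension of the fixed space `ker(u - 1)` of `u ∈ GL_n(F)`. -/
noncomputable def fixedDim {F : Type} [Field F] {n : ℕ} (u : GL (Fin n) F) : ℕ :=
  Module.finrank F (LinearMap.ker (Matrix.toLin' ((u : Matrix (Fin n) (Fin n) F) - 1)))

section Recurrence

variable {R : Type*} [CommRing R] (q : R)

theorem prod_range_succ_mul_sub_pow (y : R) (t : ℕ) :
    ∏ i ∈ range (t + 1), (q * y - q ^ i) =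
      q ^ (t + 1) * ∏ i ∈ range (t + 1), (y - q ^ i) +
        q ^ t * (q ^ (t + 1) - 1) * ∏ i ∈ range t, (y - q ^ i) := by
  have h : ∀ i, q * y - q ^ (i + 1) = q * (y - q ^ i) := fun i => by ring
  rw [prod_range_succ', prod_range_succ]
  simp only [h, prod_mul_distrib, prod_const, card_range, pow_zero]
  ring

theorem pow_eq_sum_of_recurrence {x : R} {r : ℕ → R} (h0 : r 0 = 1)
    (hr : ∀ t, (x - q ^ t) * r t = q ^ t * (q ^ (t + 1) - 1) * r (t + 1)) {d N : ℕ}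
    (hd : d ≤ N) :
    x ^ d = ∑ t ∈ range (N + 1), (∏ i ∈ range t, (q ^ d - q ^ i)) * r t := by
  induction d with
  | zero => simp [sum_range_succ', prod_range_succ', h0]
  | succ d ih =>
    have hdN : ∏ i ∈ range N, (q ^ d - q ^ i) = 0 :=
      prod_eq_zero (mem_range.2 (by omega)) (sub_self _)
    calc x ^ (d + 1)
        = ∑ t ∈ range (N + 1), (q ^ t * (∏ i ∈ range t, (q ^ d - q ^ i)) * r t +
            (∏ i ∈ range t, (q ^ d - q ^ i)) * ((x - q ^ t) * r t)) := by
          rw [pow_succ', ih (by omega), mul_sum]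
          exact sum_congr rfl fun t _ => by ring
      _ = ∑ t ∈ range (N + 1), q ^ t * (∏ i ∈ range t, (q ^ d - q ^ i)) * r t +
            ∑ t ∈ range N, (∏ i ∈ range t, (q ^ d - q ^ i)) * ((x - q ^ t) * r t) := by
          rw [sum_add_distrib, add_right_inj, sum_range_succ, hdN, zero_mul, add_zero]
      _ = r 0 + ∑ t ∈ range N, (q ^ (t + 1) * ∏ i ∈ range (t + 1), (q ^ d - q ^ i) +
            q ^ t * (q ^ (t + 1) - 1) * ∏ i ∈ range t, (q ^ d - q ^ i)) * r (t + 1) := by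
          simp only [sum_range_succ' _ N, hr, add_mul, sum_add_distrib, pow_zero, prod_range_zero,
            one_mul]
          rw [add_comm _ (r 0), add_assoc, add_right_inj, add_right_inj]
          exact sum_congr rfl fun t _ => by ring
      _ = ∑ t ∈ range (N + 1), (∏ i ∈ range t, (q ^ (d + 1) - q ^ i)) * r t := by
          simp only [sum_range_succ' _ N, pow_succ' q d, prod_range_succ_mul_sub_pow,
            prod_range_zero, one_mul]
          ring

end Recurrence

theorem qPoch_succ (a q : ℝ) (m : ℕ) : qPoch a q (m + 1) = qPoch a q m * (1 - a * q ^ m) :=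
  prod_range_succ _ _

section QPochhammer

variable {q : ℝ} (hq : 1 < q)
include hq

theorem one_sub_mul_pow_ne_zero (i : ℕ) : 1 - q * q ^ i ≠ 0 :=
  sub_ne_zero.2 (one_lt_mul_of_lt_of_le hq (one_le_pow₀ hq.le)).ne

theorem qPoch_self_ne_zero (t : ℕ) : qPoch q q t ≠ 0 :=
  prod_ne_zero_iff.2 fun i _ => one_sub_mul_pow_ne_zero hq i

theorem sub_pow_mul_qPoch_div (x : ℝ) (t : ℕ) :
    (x - q ^ t) * (qPoch x q⁻¹ t / qPoch q q t) =
      q ^ t * (q ^ (t + 1) - 1) * (qPoch x q⁻¹ (t + 1) / qPoch q q (t + 1)) := by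
  have hq0 : q ≠ 0 := by positivity
  have h₁ := qPoch_self_ne_zero hq t
  have h₂ : 1 - q ^ t * q ≠ 0 := mul_comm q (q ^ t) ▸ one_sub_mul_pow_ne_zero hq t
  rw [qPoch_succ, qPoch_succ, inv_pow, pow_succ]
  field_simp
  ring

theorem pow_eq_sum_qPoch_div (x : ℝ) {d N : ℕ} (hd : d ≤ N) :
    x ^ d = ∑ t ∈ range (N + 1),
      (∏ i ∈ range t, (q ^ d - q ^ i)) * (qPoch x q⁻¹ t / qPoch q q t) :=
  pow_eq_sum_of_recurrence q (by simp [qPoch]) (sub_pow_mul_qPoch_div hq x) hd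

end QPochhammer

theorem sum_card_fixedBy_of_isPretransitive (G X : Type*) [Group G] [Fintype G] [MulAction G X]
    [Finite X] [Nonempty X] [IsPretransitive G X] :
    ∑ g : G, Nat.card (fixedBy X g) = Nat.card G := by
  classical
  have := Fintype.ofFinite X
  have : Subsingleton (orbitRel.Quotient G X) :=
    (pretransitive_iff_subsingleton_quotient G X).1 inferInstance
  have : Unique (orbitRel.Quotient G X) :=
    uniqueOfSubsingleton (Quotient.mk _ (Classical.arbitrary X))
  simpa [Nat.card_eq_fintype_card] using sum_card_fixedBy_eq_card_orbits_mul_card_group G X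

section LinearIndependentTuples

variable {K V : Type*} [Field K] [AddCommGroup V] [Module K V]

theorem natCast_card_linearIndependent [Fintype K] [Finite V] (R : Type*) [CommRing R] (t : ℕ) :
    (Nat.card {s : Fin t → V // LinearIndependent K s} : R) =
      ∏ i ∈ range t, ((Fintype.card K : R) ^ finrank K V - (Fintype.card K : R) ^ i) := by
  rcases le_or_gt t (finrank K V) with ht | ht
  · rw [card_linearIndependent ht, Nat.cast_prod, ← Fin.prod_univ_eq_prod_range]
    refine prod_congr rfl fun i _ => ?_
    rw [Nat.cast_sub (Nat.pow_le_pow_right Fintype.card_pos (by omega))]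
    push_cast
    rfl
  · have : IsEmpty {s : Fin t → V // LinearIndependent K s} :=
      ⟨fun s => by simpa using s.2.fintype_card_le_finrank.trans_lt ht⟩
    rw [Nat.card_of_isEmpty, Nat.cast_zero, prod_eq_zero (mem_range.2 ht) (sub_self _)]

theorem exists_linearEquiv_comp_eq {ι : Type*} [Finite ι] {s₁ s₂ : ι → V}
    (hs₁ : LinearIndependent K s₁) (hs₂ : LinearIndependent K s₂) :
    ∃ g : V ≃ₗ[K] V, g ∘ s₁ = s₂ := by
  have := FiniteDimensional.span_of_finite K (Set.finite_range s₁)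
  obtain ⟨g, hg⟩ := Submodule.exists_linearEquiv_restrict_eq
    (hs₁.linearCombinationEquiv.symm ≪≫ₗ hs₂.linearCombinationEquiv)
  refine ⟨g, funext fun i => ?_⟩
  have hs₁i : hs₁.linearCombinationEquiv (Finsupp.single i 1) =
      ⟨s₁ i, Submodule.subset_span (Set.mem_range_self i)⟩ := Subtype.ext (by simp)
  have := hg ⟨s₁ i, Submodule.subset_span (Set.mem_range_self i)⟩
  rw [← hs₁i] at this
  simpa using this.symm

variable (K V) in
def linearIndependentTuples (t : ℕ) : SubMulAction (V ≃ₗ[K] V) (Fin t → V) where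
  carrier := {s | LinearIndependent K s}
  smul_mem' g _ hs := hs.map' g.toLinearMap g.ker

instance (t : ℕ) : IsPretransitive (V ≃ₗ[K] V) (linearIndependentTuples K V t) where
  exists_smul_eq := fun ⟨_, hs₁⟩ ⟨_, hs₂⟩ =>
    (exists_linearEquiv_comp_eq hs₁ hs₂).imp fun _ hg => Subtype.ext hg

theorem mem_ker_sub_one_iff {g : V ≃ₗ[K] V} {v : V} :
    v ∈ LinearMap.ker ((g : Module.End K V) - 1) ↔ g v = v := by
  simp [sub_eq_zero]

def fixedByLinearIndependentTuplesEquiv (g : V ≃ₗ[K] V) (t : ℕ) :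
    fixedBy (linearIndependentTuples K V t) g ≃
      {s : Fin t → LinearMap.ker ((g : Module.End K V) - 1) // LinearIndependent K s} where
  toFun s := ⟨fun i => ⟨s.1.1 i, mem_ker_sub_one_iff.2 (congrFun (congrArg Subtype.val s.2) i)⟩,
    LinearIndependent.of_comp (LinearMap.ker _).subtype s.1.2⟩
  invFun s := ⟨⟨fun i => s.1 i, s.2.map' _ (Submodule.ker_subtype _)⟩,
    Subtype.ext <| funext fun i => mem_ker_sub_one_iff.1 (s.1 i).2⟩
  left_inv _ := rfl
  right_inv _ := rfl

theorem sum_prod_pow_finrank_ker_sub_one [Fintype K] [Finite V] [Fintype (V ≃ₗ[K] V)]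
    (R : Type*) [CommRing R] {t : ℕ} (ht : t ≤ finrank K V) :
    ∑ g : V ≃ₗ[K] V, ∏ i ∈ range t,
        ((Fintype.card K : R) ^ finrank K (LinearMap.ker ((g : Module.End K V) - 1)) -
          (Fintype.card K : R) ^ i) =
      Nat.card (V ≃ₗ[K] V) := by
  have : Nonempty (linearIndependentTuples K V t) :=
    ⟨⟨_, (finBasis K V).linearIndependent.comp _ (Fin.castLE_injective ht)⟩⟩
  rw [← sum_card_fixedBy_of_isPretransitive _ (linearIndependentTuples K V t), Nat.cast_sum]
  refine sum_congr rfl fun g _ => ?_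
  rw [Nat.card_congr (fixedByLinearIndependentTuplesEquiv g t), natCast_card_linearIndependent]

end LinearIndependentTuples

theorem fixedDim_eq_finrank_ker {F : Type} [Field F] {n : ℕ} (u : GL (Fin n) F) :
    fixedDim u = finrank F (LinearMap.ker
      ((LinearMap.GeneralLinearGroup.generalLinearEquiv F (Fin n → F)
        (Matrix.GeneralLinearGroup.toLin u) : Module.End F (Fin n → F)) - 1)) := by
  rw [fixedDim, map_sub, Matrix.toLin'_one,
    LinearMap.GeneralLinearGroup.generalLinearEquiv_to_linearMap,
    Matrix.GeneralLinearGroup.coe_toLin]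
  rfl

theorem sum_prod_pow_fixedDim (F : Type) [Field F] [Fintype F] [DecidableEq F] (R : Type*)
    [CommRing R] {n t : ℕ} (ht : t ≤ n) :
    ∑ u : GL (Fin n) F, ∏ i ∈ range t,
        ((Fintype.card F : R) ^ fixedDim u - (Fintype.card F : R) ^ i) =
      Nat.card (GL (Fin n) F) := by
  let e := Matrix.GeneralLinearGroup.toLin.toEquiv.trans
    (LinearMap.GeneralLinearGroup.generalLinearEquiv F (Fin n → F)).toEquiv
  have := Fintype.ofEquiv _ e
  calc _ = ∑ g : (Fin n → F) ≃ₗ[F] (Fin n → F), ∏ i ∈ range t,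
        ((Fintype.card F : R) ^ finrank F (LinearMap.ker ((g : Module.End F (Fin n → F)) - 1)) -
          (Fintype.card F : R) ^ i) :=
        Fintype.sum_equiv e _ _ fun u => by rw [fixedDim_eq_finrank_ker]; rfl
    _ = Nat.card (GL (Fin n) F) := by
        rw [Nat.card_congr e, sum_prod_pow_finrank_ker_sub_one R (by simpa using ht)]

/-- The Rudvalis–Shinoda generating function for `GL_n(F_q)` by fixed space dimension. -/
theorem glnq_fixed_space_genfun
    (F : Type) [Field F] [Fintype F] [DecidableEq F] (q : ℝ) (hq : q = Fintype.card F)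
    (n : ℕ) (x : ℝ) :
    ∑ u : GL (Fin n) F, x ^ fixedDim u
    = (Nat.card (GL (Fin n) F) : ℝ) *
        ∑ t ∈ Finset.range (n + 1), qPoch x q⁻¹ t / qPoch q q t := by
  have hq1 : 1 < q := hq ▸ Nat.one_lt_cast.2 Fintype.one_lt_card
  have hdim (u : GL (Fin n) F) : fixedDim u ≤ n :=
    (Submodule.finrank_le _).trans_eq (finrank_fin_fun F)
  calc ∑ u : GL (Fin n) F, x ^ fixedDim u
      = ∑ t ∈ range (n + 1), (∑ u : GL (Fin n) F, ∏ i ∈ range t, (q ^ fixedDim u - q ^ i)) *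
          (qPoch x q⁻¹ t / qPoch q q t) := by
        simp only [pow_eq_sum_qPoch_div hq1 x (hdim _), sum_mul]
        exact sum_comm
    _ = (Nat.card (GL (Fin n) F) : ℝ) * ∑ t ∈ range (n + 1), qPoch x q⁻¹ t / qPoch q q t := by
        rw [mul_sum]
        refine sum_congr rfl fun t ht => ?_
        rw [hq, sum_prod_pow_fixedDim F ℝ (Nat.lt_succ_iff.1 (mem_range.1 ht))]
end

section
/- Let q > 1 be real and let b, c be real numbers. Then there exist constants C₁, C₂ > 0, depending only on q and b − c, such that for every real a and every integer g ≥ 0 there is an N with: for all integers n ≥ N, C₁ · R(n) ≤ Σ_{r,s ≥ 1, r+s = n−g} q^{2rs + an + br + cs} ≤ C₂ · R(n), where R(n) = q^{(b−c)²/8 + g(g−b−c)/2 + n²/2 + (2a+b+c−2g)n/2}. -/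
/-!
Completing the square in `r` turns the exponent into `E - 2 (r - ρ)²`, where `E` is the exponent
of the comparison term and `ρ = (n - g)/2 + (b - c)/4`. So the sum is `q ^ E` times the partial
theta sum `∑ t ^ ((r - ρ)²)` with `t = q⁻²`. The terms on either side of `ρ` are dominated by a
geometric series in `t`, which bounds the theta sum by `2 / (1 - t)`; once `n - g ≥ |b - c| + 2`,
the range `1 ≤ r < n - g` contains `⌊ρ⌋`, whose term alone is at least `t`.
-/

open Finset

namespace ThetaEstimate

variable {t : ℝ}

lemma sum_le_inv_one_sub_of_le_pow_of_injOn (ht0 : 0 ≤ t) (ht1 : t < 1) {s : Finset ℕ}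
    {F : ℕ → ℝ} {f : ℕ → ℕ} (hf : Set.InjOn f s) (hF : ∀ r ∈ s, F r ≤ t ^ f r) :
    ∑ r ∈ s, F r ≤ (1 - t)⁻¹ :=
  calc ∑ r ∈ s, F r ≤ ∑ r ∈ s, t ^ f r := sum_le_sum hF
    _ = ∑ i ∈ s.image f, t ^ i := (sum_image hf).symm
    _ ≤ ∑' i, t ^ i :=
        (summable_geometric_of_lt_one ht0 ht1).sum_le_tsum _ fun i _ ↦ pow_nonneg ht0 i
    _ = (1 - t)⁻¹ := tsum_geometric_of_lt_one ht0 ht1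

lemma rpow_sq_le_pow_of_le_abs (ht0 : 0 < t) (ht1 : t ≤ 1) {x : ℝ} {j : ℕ}
    (hj : (j : ℝ) ≤ |x|) : t ^ (x ^ 2) ≤ t ^ j := by
  rw [← Real.rpow_natCast t j]
  refine Real.rpow_le_rpow_of_exponent_ge ht0 ht1 ?_
  have hj1 : (j : ℝ) ≤ (j : ℝ) ^ 2 := by exact_mod_cast Nat.le_self_pow two_ne_zero j
  nlinarith [sq_abs x, abs_nonneg x, Nat.cast_nonneg (α := ℝ) j]

lemma sum_rpow_sq_sub_le_of_forall_ge (ht0 : 0 < t) (ht1 : t < 1) {s : Finset ℕ} {ρ : ℝ}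
    (hs : ∀ r ∈ s, ρ ≤ r) : ∑ r ∈ s, t ^ (((r : ℝ) - ρ) ^ 2) ≤ (1 - t)⁻¹ := by
  have hceil : ∀ r ∈ s, ⌈ρ⌉₊ ≤ r := fun r hr ↦ Nat.ceil_le.mpr (hs r hr)
  refine sum_le_inv_one_sub_of_le_pow_of_injOn ht0.le ht1 (f := (· - ⌈ρ⌉₊)) ?_ fun r hr ↦ ?_
  · intro r hr r' hr' h
    have := hceil r hr
    have := hceil r' hr'
    simp only at h
    omega
  · refine rpow_sq_le_pow_of_le_abs ht0 ht1.le ?_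
    rw [Nat.cast_sub (hceil r hr), abs_of_nonneg (sub_nonneg.mpr (hs r hr))]
    have : ρ ≤ ⌈ρ⌉₊ := Nat.le_ceil ρ
    linarith

lemma sum_rpow_sq_sub_le_of_forall_le (ht0 : 0 < t) (ht1 : t < 1) {s : Finset ℕ} {ρ : ℝ}
    (hs : ∀ r ∈ s, (r : ℝ) ≤ ρ) : ∑ r ∈ s, t ^ (((r : ℝ) - ρ) ^ 2) ≤ (1 - t)⁻¹ := by
  have hfloor : ∀ r ∈ s, r ≤ ⌊ρ⌋₊ := fun r hr ↦ Nat.le_floor (hs r hr)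
  refine sum_le_inv_one_sub_of_le_pow_of_injOn ht0.le ht1 (f := (⌊ρ⌋₊ - ·)) ?_ fun r hr ↦ ?_
  · intro r hr r' hr' h
    have := hfloor r hr
    have := hfloor r' hr'
    simp only at h
    omega
  · refine rpow_sq_le_pow_of_le_abs ht0 ht1.le ?_
    have hρ : 0 ≤ ρ := (Nat.cast_nonneg r).trans (hs r hr)
    rw [Nat.cast_sub (hfloor r hr), abs_of_nonpos (sub_nonpos.mpr (hs r hr))]
    have : (⌊ρ⌋₊ : ℝ) ≤ ρ := Nat.floor_le hρ
    linarith

lemma sum_rpow_sq_sub_le (ht0 : 0 < t) (ht1 : t < 1) (s : Finset ℕ) (ρ : ℝ) :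
    ∑ r ∈ s, t ^ (((r : ℝ) - ρ) ^ 2) ≤ 2 * (1 - t)⁻¹ := by
  rw [← sum_filter_add_sum_filter_not s (fun r : ℕ ↦ (r : ℝ) ≤ ρ), two_mul]
  gcongr
  · exact sum_rpow_sq_sub_le_of_forall_le ht0 ht1 fun r hr ↦ (mem_filter.mp hr).2
  · exact sum_rpow_sq_sub_le_of_forall_ge ht0 ht1 fun r hr ↦ (not_le.mp (mem_filter.mp hr).2).le

lemma le_sum_Ico_rpow_sq_sub (ht0 : 0 < t) (ht1 : t ≤ 1) {m : ℕ} {ρ : ℝ} (hρ1 : 1 ≤ ρ)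
    (hρm : ρ < m) : t ≤ ∑ r ∈ Ico 1 m, t ^ (((r : ℝ) - ρ) ^ 2) := by
  have hk1 : 1 ≤ ⌊ρ⌋₊ := Nat.le_floor (by exact_mod_cast hρ1)
  have hkm : ⌊ρ⌋₊ < m := (Nat.floor_lt (by linarith)).mpr hρm
  have hdist : ((⌊ρ⌋₊ : ℝ) - ρ) ^ 2 ≤ 1 := by
    have := Nat.floor_le (by linarith : 0 ≤ ρ)
    have := Nat.lt_floor_add_one ρ
    nlinarith
  calc t = t ^ (1 : ℝ) := (Real.rpow_one t).symm
    _ ≤ t ^ (((⌊ρ⌋₊ : ℝ) - ρ) ^ 2) := Real.rpow_le_rpow_of_exponent_ge ht0 ht1 hdist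
    _ ≤ ∑ r ∈ Ico 1 m, t ^ (((r : ℝ) - ρ) ^ 2) :=
        single_le_sum (f := fun r : ℕ ↦ t ^ (((r : ℝ) - ρ) ^ 2))
          (fun r _ ↦ (Real.rpow_pos_of_pos ht0 _).le) (mem_Ico.mpr ⟨hk1, hkm⟩)

lemma rpow_sub_two_mul_sq {q : ℝ} (hq : 0 < q) (x y : ℝ) :
    q ^ (x - 2 * y ^ 2) = q ^ x * (q ^ (-2 : ℝ)) ^ (y ^ 2) := by
  rw [← Real.rpow_mul hq.le, ← Real.rpow_add hq]
  ring_nf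

lemma genus_exponent_eq (a b c g n r : ℝ) :
    2 * r * (n - g - r) + a * n + b * r + c * (n - g - r) =
      ((b - c) ^ 2 / 8 + g * (g - b - c) / 2 + n ^ 2 / 2 + (2 * a + b + c - 2 * g) * n / 2) -
        2 * (r - ((n - g) / 2 + (b - c) / 4)) ^ 2 := by
  ring

end ThetaEstimate

open ThetaEstimate

/-- Proposition 5.4: the Θ-estimate, as `n → ∞`, for
`Σ_{r,s ≥ 1, r+s = n−g} q^{2rs + an + br + cs}`, with implicit constants depending only
on `q` and on the difference `b − c`. -/
theorem theta_estimate_for_genus_sums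
    (q : ℝ) (hq : 1 < q) (δ : ℝ) :
    ∃ C₁ C₂ : ℝ, 0 < C₁ ∧ 0 < C₂ ∧
      ∀ b c : ℝ, b - c = δ →
        ∀ a : ℝ, ∀ g : ℕ, ∃ N : ℕ, ∀ n : ℕ, N ≤ n →
          C₁ * q ^ ((b - c) ^ 2 / 8 + (g : ℝ) * ((g : ℝ) - b - c) / 2 + (n : ℝ) ^ 2 / 2 +
                (2 * a + b + c - 2 * (g : ℝ)) * (n : ℝ) / 2)
              ≤ (∑ r ∈ Finset.Ico 1 (n - g),
                  q ^ (2 * (r : ℝ) * ((n : ℝ) - (g : ℝ) - (r : ℝ)) + a * (n : ℝ) +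
                    b * (r : ℝ) + c * ((n : ℝ) - (g : ℝ) - (r : ℝ)))) ∧
            (∑ r ∈ Finset.Ico 1 (n - g),
                q ^ (2 * (r : ℝ) * ((n : ℝ) - (g : ℝ) - (r : ℝ)) + a * (n : ℝ) +
                  b * (r : ℝ) + c * ((n : ℝ) - (g : ℝ) - (r : ℝ))))
              ≤ C₂ * q ^ ((b - c) ^ 2 / 8 + (g : ℝ) * ((g : ℝ) - b - c) / 2 + (n : ℝ) ^ 2 / 2 +
                  (2 * a + b + c - 2 * (g : ℝ)) * (n : ℝ) / 2) := by
  have hq0 : 0 < q := by linarith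
  set t : ℝ := q ^ (-2 : ℝ)
  have ht0 : 0 < t := Real.rpow_pos_of_pos hq0 _
  have ht1 : t < 1 := Real.rpow_lt_one_of_one_lt_of_neg hq (by norm_num)
  refine ⟨t, 2 * (1 - t)⁻¹, ht0, by have := sub_pos.mpr ht1; positivity, ?_⟩
  intro b c hbc a g
  refine ⟨g + ⌈|δ|⌉₊ + 2, fun n hn ↦ ?_⟩
  set E := (b - c) ^ 2 / 8 + (g : ℝ) * ((g : ℝ) - b - c) / 2 + (n : ℝ) ^ 2 / 2 +
    (2 * a + b + c - 2 * (g : ℝ)) * (n : ℝ) / 2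
  set ρ := ((n : ℝ) - g) / 2 + (b - c) / 4 with hρ
  have hsum : ∑ r ∈ Ico 1 (n - g), q ^ (2 * (r : ℝ) * ((n : ℝ) - (g : ℝ) - (r : ℝ)) +
      a * (n : ℝ) + b * (r : ℝ) + c * ((n : ℝ) - (g : ℝ) - (r : ℝ))) =
      q ^ E * ∑ r ∈ Ico 1 (n - g), t ^ (((r : ℝ) - ρ) ^ 2) := by
    rw [mul_sum]
    exact sum_congr rfl fun r _ ↦ by rw [genus_exponent_eq, rpow_sub_two_mul_sq hq0]
  have hm : ((n - g : ℕ) : ℝ) = n - g := Nat.cast_sub (by omega)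
  have hδ : |δ| + 2 ≤ (n : ℝ) - g := by
    have : ((g + ⌈|δ|⌉₊ + 2 : ℕ) : ℝ) ≤ n := by exact_mod_cast hn
    push_cast at this
    linarith [Nat.le_ceil |δ|]
  have hρ1 : 1 ≤ ρ := by rw [hρ, hbc]; linarith [neg_abs_le δ, abs_nonneg δ]
  have hρm : ρ < ((n - g : ℕ) : ℝ) := by rw [hρ, hbc, hm]; linarith [le_abs_self δ]
  have hE : 0 ≤ q ^ E := (Real.rpow_pos_of_pos hq0 E).le
  rw [hsum, mul_comm t, mul_comm (2 * (1 - t)⁻¹)]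
  exact ⟨mul_le_mul_of_nonneg_left (le_sum_Ico_rpow_sq_sub ht0 ht1.le hρ1 hρm) hE,
    mul_le_mul_of_nonneg_left (sum_rpow_sq_sub_le ht0 ht1 _ ρ) hE⟩
end
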